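/- Let g : ℕ → ℂ be an arithmetic function and define f : ℕ^k → ℂ by f(n₁,…,n_k) = g(gcd(n₁,…,n_k)). Then the k-variable Möbius inverse of f is the principal function of μ∗g: (μ_k ∗_k f)(n₁,…,n_k) = (μ∗g)(n) if n₁ = ⋯ = n_k = n, and 0 otherwise. -/

import Mathlib

open Finset ArithmeticFunction
open scoped ArithmeticFunction.Moebius

/-! Möbius inversion writes `g = ζ ∗ h` with `h = μ ∗ g`, so `g (gcd (n / d))` is the sum of
`h c` over the common divisors `c` of the `n i / d i`. After interchanging the sums over `d` and
`c`, the sum over `d` factors over the coordinates, and for each `i` the factor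
`∑_{e ∣ n i, c ∣ n i / e} μ e = ∑_{e ∣ n i / c} μ e` is `1` exactly when `n i = c`. -/

section Ring
variable {R : Type*} [Ring R]

theorem sum_divisors_moebius (m : ℕ) :
    ∑ e ∈ m.divisors, (μ e : R) = if m = 1 then 1 else 0 := by
  rw [← one_apply, ← coe_moebius_mul_coe_zeta, coe_mul_zeta_apply]
  simp only [intCoe_apply]

theorem Nat.filter_dvd_div_divisors {m c : ℕ} (hcm : c ∣ m) :
    {e ∈ m.divisors | c ∣ m / e} = (m / c).divisors := by
  ext e
  simp only [mem_filter, Nat.mem_divisors, Nat.dvd_div_iff_mul_dvd hcm]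
  constructor
  · rintro ⟨⟨hem, hm⟩, hce⟩
    rw [Nat.dvd_div_iff_mul_dvd hem, mul_comm] at hce
    exact ⟨hce, fun h => hm (Nat.eq_zero_of_dvd_of_div_eq_zero hcm h)⟩
  · rintro ⟨hce, hm⟩
    have hem : e ∣ m := (dvd_mul_left e c).trans hce
    rw [Nat.dvd_div_iff_mul_dvd hem, mul_comm]
    exact ⟨⟨hem, fun h => hm (by simp [h])⟩, hce⟩

theorem sum_moebius_filter_dvd_div {m c : ℕ} (hc : c ≠ 0) :
    ∑ e ∈ m.divisors with c ∣ m / e, (μ e : R) = if m = c then 1 else 0 := by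
  by_cases hcm : c ∣ m
  · rw [Nat.filter_dvd_div_divisors hcm, sum_divisors_moebius]
    simp only [Nat.div_eq_iff_eq_mul_left (Nat.pos_of_ne_zero hc) hcm, one_mul]
  · have hempty : {e ∈ m.divisors | c ∣ m / e} = ∅ :=
      filter_false_of_mem fun e he hce =>
        hcm (hce.trans (Nat.div_dvd_of_dvd (Nat.dvd_of_mem_divisors he)))
    rw [hempty, sum_empty, if_neg (by rintro rfl; exact hcm dvd_rfl)]

theorem sum_divisors_sum_moebius_mul (g : ℕ → R) {m : ℕ} (hm : m ≠ 0) :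
    ∑ c ∈ m.divisors, ∑ e ∈ c.divisors, (μ e : R) * g (c / e) = g m :=
  sum_eq_iff_sum_mul_moebius_eq.mpr
    (fun _ _ => Nat.sum_divisorsAntidiagonal fun a b => (μ a : R) * g b) m
    (Nat.pos_of_ne_zero hm)

theorem apply_gcd_eq_sum_filter_dvd {ι : Type*} [Fintype ι] (g : ℕ → R) {a : ι → ℕ}
    {N : ℕ} (hN : N ≠ 0) (haN : univ.gcd a ∣ N) (ha : univ.gcd a ≠ 0) :
    g (univ.gcd a) =
      ∑ c ∈ N.divisors with ∀ i, c ∣ a i, ∑ e ∈ c.divisors, (μ e : R) * g (c / e) := by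
  rw [← sum_divisors_sum_moebius_mul g ha, ← Nat.divisors_filter_dvd_of_dvd hN haN]
  simp only [Finset.dvd_gcd_iff, mem_univ, true_implies]

end Ring

section CommRing
variable {R : Type*} [CommRing R] {ι : Type*} [Fintype ι]

theorem prod_moebius_mul_apply_gcd_div (g : ℕ → R) {n d : ι → ℕ} {i₀ : ι}
    (hd₀ : d i₀ ∈ (n i₀).divisors) :
    (∏ i, (μ (d i) : R)) * g (univ.gcd fun i => n i / d i) =
      ∑ c ∈ (n i₀).divisors, (∑ e ∈ c.divisors, (μ e : R) * g (c / e)) *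
        ∏ i, if c ∣ n i / d i then (μ (d i) : R) else 0 := by
  have hdvd : (univ.gcd fun i => n i / d i) ∣ n i₀ :=
    (gcd_dvd (mem_univ i₀)).trans (Nat.div_dvd_of_dvd (Nat.dvd_of_mem_divisors hd₀))
  have hne : (univ.gcd fun i => n i / d i) ≠ 0 := fun h0 =>
    (Nat.div_pos (Nat.divisor_le hd₀) (Nat.pos_of_mem_divisors hd₀)).ne'
      (gcd_eq_zero_iff.mp h0 i₀ (mem_univ _))
  rw [apply_gcd_eq_sum_filter_dvd g (Nat.ne_zero_of_mem_divisors hd₀) hdvd hne, sum_filter,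
    mul_sum]
  refine sum_congr rfl fun c _ => ?_
  rw [Fintype.prod_ite_zero]
  split_ifs <;> ring

theorem sum_piFinset_prod_moebius_ite_dvd_div [DecidableEq ι] (n : ι → ℕ) {c : ℕ}
    (hc : c ≠ 0) :
    ∑ d ∈ Fintype.piFinset (fun i => (n i).divisors),
        ∏ i, (if c ∣ n i / d i then (μ (d i) : R) else 0) =
      if ∀ i, n i = c then 1 else 0 := by
  rw [← prod_univ_sum (fun i => (n i).divisors)
    fun i e => if c ∣ n i / e then (μ e : R) else 0]
  simp only [← sum_filter, sum_moebius_filter_dvd_div hc, Fintype.prod_boole]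

end CommRing

theorem moebius_inverse_of_gcd_function_general (k : ℕ) (hk : 0 < k) (g : ℕ → ℂ)
    (n : Fin k → ℕ) :
    ∑ d ∈ Fintype.piFinset (fun i => (n i).divisors),
      (∏ i, (ArithmeticFunction.moebius (d i) : ℂ)) *
        g (Finset.univ.gcd (fun i => n i / d i))
      = if ∀ i, n i = n ⟨0, hk⟩ then
          ∑ e ∈ (n ⟨0, hk⟩).divisors,
            (ArithmeticFunction.moebius e : ℂ) * g (n ⟨0, hk⟩ / e)
        else 0 := by
  set i₀ : Fin k := ⟨0, hk⟩
  set h : ℕ → ℂ := fun c => ∑ e ∈ c.divisors, (μ e : ℂ) * g (c / e)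
  calc _ = ∑ d ∈ Fintype.piFinset (fun i => (n i).divisors), ∑ c ∈ (n i₀).divisors,
          h c * ∏ i, if c ∣ n i / d i then (μ (d i) : ℂ) else 0 :=
        sum_congr rfl fun d hd => prod_moebius_mul_apply_gcd_div g (Fintype.mem_piFinset.mp hd i₀)
    _ = ∑ c ∈ (n i₀).divisors, h c * if ∀ i, n i = c then 1 else 0 := by
        rw [sum_comm]
        refine sum_congr rfl fun c hc => ?_
        rw [← mul_sum, sum_piFinset_prod_moebius_ite_dvd_div n (Nat.pos_of_mem_divisors hc).ne']
        congr -- the two `ite`s differ only in their `Decidable` instances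
    _ = _ := by
        by_cases hall : ∀ i, n i = n i₀
        · have hiff : ∀ c, (∀ i, n i = c) ↔ c = n i₀ := fun c =>
            ⟨fun H => (H i₀).symm, fun hc i => (hall i).trans hc.symm⟩
          rw [if_pos hall]
          simp only [hiff, mul_boole, sum_ite_eq', Nat.mem_divisors, dvd_refl, true_and]
          split_ifs with h0
          · rfl
          · simp [not_not.mp h0]
        · rw [if_neg hall]
          refine sum_eq_zero fun c _ => ?_
          rw [if_neg fun H => hall fun i => (H i).trans (H i₀).symm, mul_zero]

theorem moebius_inverse_of_gcd_function (k : ℕ) (hk : 0 < k) (g : ℕ → ℂ)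
    (n : Fin k → ℕ) (hn : ∀ i, 0 < n i) :
    ∑ d ∈ Fintype.piFinset (fun i => (n i).divisors),
      (∏ i, (ArithmeticFunction.moebius (d i) : ℂ)) *
        g (Finset.univ.gcd (fun i => n i / d i))
      = if ∀ i, n i = n ⟨0, hk⟩ then
          ∑ e ∈ (n ⟨0, hk⟩).divisors,
            (ArithmeticFunction.moebius e : ℂ) * g (n ⟨0, hk⟩ / e)
        else 0 :=
  moebius_inverse_of_gcd_function_general k hk g n
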